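/- For every lattice polygon P in ℝ² and every positive integer h, h(P ∩ ℤ²) = (hP) ∩ ℤ²; that is, every lattice point of the h-fold sumset hP is a sum of h lattice points of P. -/

import Mathlib

open MeasureTheory Pointwise

/-- The lattice points of `ℝ^n`: points with all coordinates integers. -/
def latticePts (n : ℕ) : Set (Fin n → ℝ) :=
  {x | ∀ i, ∃ z : ℤ, x i = (z : ℝ)}

/-- The `h`-fold sumset of `X ⊆ ℝ^n`. -/
def sumset (n h : ℕ) (X : Set (Fin n → ℝ)) : Set (Fin n → ℝ) :=
  {y | ∃ f : Fin h → (Fin n → ℝ), (∀ i, f i ∈ X) ∧ y = ∑ i, f i}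

/-- The dilation `h ∗ X = {h • x : x ∈ X}`. -/
def dilate (n h : ℕ) (X : Set (Fin n → ℝ)) : Set (Fin n → ℝ) :=
  {y | ∃ x ∈ X, y = (h : ℝ) • x}

/-- `P` is a lattice polytope in `ℝ^n`: the convex hull of a nonempty finite set of
lattice points. -/
def IsLatticePolytope (n : ℕ) (P : Set (Fin n → ℝ)) : Prop :=
  ∃ S : Finset (Fin n → ℝ), S.Nonempty ∧ ↑S ⊆ latticePts n ∧ P = convexHull ℝ (S : Set (Fin n → ℝ))

/-!
By Carathéodory, a lattice point `y` of `hP` is `∑ μᵢ vᵢ` with affinely independent vertices `vᵢ`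
of `P` (so at most three of them), `μᵢ ≥ 0` and `∑ μᵢ = h`. Splitting off a vertex whose
coefficient is at least one lowers `h` by one, so we may assume every `μᵢ < 1`, whence `h ≤ 2`;
the case `h = 1` is trivial. For `h = 2` the vertices form a lattice triangle `u`, and
`w = ∑ uᵢ - y` is a lattice point of it with barycentric coordinates `1 - μᵢ > 0`. Replacing a
suitable vertex `uᵢ` by `w` gives a smaller lattice triangle, twice of which still contains `y`,
and whose determinant is `1 - μᵢ < 1` times the old one; induct on `|det|`.
-/

open Finset Set

def latticeAddSubgroup (n : ℕ) : AddSubgroup (Fin n → ℝ) where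
  carrier := latticePts n
  add_mem' {a b} ha hb i := by
    obtain ⟨z, hz⟩ := ha i
    obtain ⟨z', hz'⟩ := hb i
    exact ⟨z + z', by simp [hz, hz']⟩
  zero_mem' _ := ⟨0, by simp⟩
  neg_mem' {a} ha i := by
    obtain ⟨z, hz⟩ := ha i
    exact ⟨-z, by simp [hz]⟩

section Barycentric

variable {ι E : Type*} [AddCommGroup E] [Module ℝ E]

lemma convexHull_range_update_subset [DecidableEq ι] {u : ι → E} {i : ι} {w : E}
    (hw : w ∈ convexHull ℝ (range u)) :
    convexHull ℝ (range (Function.update u i w)) ⊆ convexHull ℝ (range u) :=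
  convexHull_min (range_subset_iff.2 <| (Function.forall_update_iff u
      fun _ x => x ∈ convexHull ℝ (range u)).2
    ⟨hw, fun j _ => subset_convexHull ℝ _ (mem_range_self j)⟩) (convex_convexHull ℝ _)

variable [Fintype ι]

lemma sum_smul_mem_convexHull_range (u : ι → E) {μ : ι → ℝ} (hμ : ∀ j, 0 ≤ μ j)
    (hμ1 : ∑ j, μ j = 1) : ∑ j, μ j • u j ∈ convexHull ℝ (range u) :=
  (convex_convexHull ℝ _).sum_mem (fun j _ => hμ j) hμ1 fun j _ =>
    subset_convexHull ℝ _ (mem_range_self j)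

lemma exists_sum_smul_eq_add_of_one_le [DecidableEq ι] (u : ι → E) {μ : ι → ℝ}
    (hμ : ∀ j, 0 ≤ μ j) {i : ι} (hi : 1 ≤ μ i) :
    ∃ ν : ι → ℝ, (∀ j, 0 ≤ ν j) ∧ ∑ j, ν j + 1 = ∑ j, μ j ∧
      ∑ j, μ j • u j = ∑ j, ν j • u j + u i := by
  refine ⟨μ - Pi.single i 1, fun j => ?_, ?_, ?_⟩
  · rcases eq_or_ne j i with rfl | hj
    · simpa using hi
    · simpa [hj] using hμ j
  · simp [sum_sub_distrib]
  · simp [sub_smul, sum_sub_distrib, Pi.single_apply]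

lemma sum_smul_update [DecidableEq ι] (a : ι → ℝ) (u : ι → E) (i : ι) (w : E) :
    ∑ j, a j • Function.update u i w j = ∑ j, a j • u j + a i • (w - u i) := by
  rw [Fintype.sum_eq_add_sum_compl i, Fintype.sum_eq_add_sum_compl i (fun j => a j • u j),
    sum_congr rfl fun j hj => by rw [Function.update_of_ne (by simpa using hj)]]
  simp only [Function.update_self, smul_sub]
  abel

lemma exists_sum_smul_update_eq [DecidableEq ι] (u : ι → E) {c μ : ι → ℝ} (hc : ∀ j, 0 < c j)
    (hc1 : ∑ j, c j = 1) (hμ : ∀ j, 0 ≤ μ j) :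
    ∃ i, ∃ ν : ι → ℝ, (∀ j, 0 ≤ ν j) ∧ ∑ j, ν j = ∑ j, μ j ∧
      ∑ j, ν j • Function.update u i (∑ j, c j • u j) j = ∑ j, μ j • u j := by
  -- minimising `μ j / c j` keeps the new coefficients `μ j - t * c j` nonnegative
  obtain ⟨i, -, hi⟩ := exists_min_image univ (fun j => μ j / c j)
    (nonempty_of_sum_ne_zero (hc1.trans_ne one_ne_zero))
  set t := μ i / c i
  have ht : t * c i = μ i := div_mul_cancel₀ _ (hc i).ne'
  refine ⟨i, μ - t • c + Pi.single i t, fun j => ?_, ?_, ?_⟩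
  · rcases eq_or_ne j i with rfl | hj
    · simpa [ht] using div_nonneg (hμ j) (hc j).le
    · simpa [hj, ← le_div_iff₀ (hc j)] using hi j (mem_univ j)
  · simp [sum_add_distrib, sum_sub_distrib, ← mul_sum, hc1]
  · rw [sum_smul_update]
    simp only [Pi.add_apply, Pi.sub_apply, Pi.smul_apply, smul_eq_mul, add_smul, sub_smul,
      mul_smul, sum_add_distrib, sum_sub_distrib, ← smul_sum, Fintype.sum_single_smul, ht,
      sub_self, Pi.single_eq_same, zero_add]
    module

end Barycentric

section Sumset

variable {n : ℕ} {X Y : Set (Fin n → ℝ)}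

lemma sumset_mono {h : ℕ} (hXY : X ⊆ Y) : sumset n h X ⊆ sumset n h Y :=
  fun _ ⟨f, hf, hy⟩ => ⟨f, fun i => hXY (hf i), hy⟩

lemma zero_mem_sumset_zero : (0 : Fin n → ℝ) ∈ sumset n 0 X :=
  ⟨Fin.elim0, Fin.rec0, by simp⟩

lemma mem_sumset_one {x : Fin n → ℝ} (hx : x ∈ X) : x ∈ sumset n 1 X :=
  ⟨fun _ => x, fun _ => hx, by simp⟩

lemma add_mem_sumset {h₁ h₂ : ℕ} {y₁ y₂ : Fin n → ℝ} (hy₁ : y₁ ∈ sumset n h₁ X)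
    (hy₂ : y₂ ∈ sumset n h₂ X) : y₁ + y₂ ∈ sumset n (h₁ + h₂) X := by
  obtain ⟨f, hf, rfl⟩ := hy₁
  obtain ⟨g, hg, rfl⟩ := hy₂
  exact ⟨Fin.append f g, Fin.addCases (by simpa using hf) (by simpa using hg),
    by rw [Fin.sum_univ_add]; simp⟩

lemma sumset_inter_latticePts_subset (h : ℕ) :
    sumset n h (X ∩ latticePts n) ⊆ sumset n h X ∩ latticePts n := by
  rintro _ ⟨f, hf, rfl⟩
  exact ⟨⟨f, fun i => (hf i).1, rfl⟩, (latticeAddSubgroup n).sum_mem fun i _ => (hf i).2⟩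

lemma inv_smul_mem_of_mem_sumset (hX : Convex ℝ X) {h : ℕ} (hh : h ≠ 0) {y : Fin n → ℝ}
    (hy : y ∈ sumset n h X) : (h : ℝ)⁻¹ • y ∈ X := by
  obtain ⟨f, hf, rfl⟩ := hy
  rw [smul_sum]
  exact hX.sum_mem (fun _ _ => by positivity) (by simp [hh]) fun i _ => hf i

lemma exists_affineIndependent_of_mem_sumset_convexHull {S : Set (Fin n → ℝ)} {h : ℕ}
    {y : Fin n → ℝ} (hy : y ∈ sumset n h (convexHull ℝ S)) :
    ∃ (m : ℕ) (v : Fin m → Fin n → ℝ) (μ : Fin m → ℝ), AffineIndependent ℝ v ∧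
      (∀ i, v i ∈ S) ∧ (∀ i, 0 ≤ μ i) ∧ ∑ i, μ i = h ∧ y = ∑ i, μ i • v i := by
  rcases eq_or_ne h 0 with rfl | hh
  · obtain ⟨f, -, rfl⟩ := hy
    exact ⟨0, Fin.elim0, Fin.elim0, affineIndependent_of_subsingleton _ _, Fin.rec0, Fin.rec0,
      by simp, by simp⟩
  obtain ⟨ι, _, v, w, hvS, hv, hw, hw1, hwv⟩ :=
    eq_pos_convex_span_of_mem_convexHull (inv_smul_mem_of_mem_sumset (convex_convexHull ℝ S) hh hy)
  let e := Fintype.equivFin ι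
  refine ⟨Fintype.card ι, v ∘ e.symm, fun j => h * w (e.symm j),
    (affineIndependent_equiv e.symm).2 hv, fun j => hvS (mem_range_self _),
    fun j => by have := hw (e.symm j); positivity, ?_, ?_⟩
  · rw [Equiv.sum_comp e.symm (fun j => (h : ℝ) * w j), ← mul_sum, hw1, mul_one]
  · simp_rw [Function.comp_apply, mul_smul]
    rw [Equiv.sum_comp e.symm (fun j => (h : ℝ) • w j • v j), ← smul_sum, hwv,
      smul_inv_smul₀ (Nat.cast_ne_zero.2 hh)]

end Sumset

def triangleDet (u : Fin 3 → Fin 2 → ℝ) : ℝ :=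
  Matrix.det (Matrix.of ![u 1 - u 0, u 2 - u 0])

lemma triangleDet_update (u : Fin 3 → Fin 2 → ℝ) (i : Fin 3) {c : Fin 3 → ℝ} (hc : ∑ j, c j = 1) :
    triangleDet (Function.update u i (∑ j, c j • u j)) = c i * triangleDet u := by
  have hc0 : c 0 = 1 - c 1 - c 2 := by rw [Fin.sum_univ_three] at hc; linarith
  fin_cases i <;>
  · simp [triangleDet, Matrix.det_fin_two, Fin.sum_univ_three, hc0]
    ring

lemma triangleDet_ne_zero {u : Fin 3 → Fin 2 → ℝ} (hu : AffineIndependent ℝ u) :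
    triangleDet u ≠ 0 := by
  intro hdet
  obtain ⟨c, hc, hcu⟩ := Matrix.exists_vecMul_eq_zero_iff.2 hdet
  have hc_eq := hu.eq_zero_of_sum_eq_zero (s := univ) (w := ![-(c 0 + c 1), c 0, c 1])
    (by simp [Fin.sum_univ_three]) (by
      rw [← hcu]
      ext k
      simp [Fin.sum_univ_three, Matrix.vecMul, dotProduct, Fin.sum_univ_two]
      ring)
  have hc0 : c 0 = 0 := by simpa using hc_eq 1 (mem_univ _)
  have hc1 : c 1 = 0 := by simpa using hc_eq 2 (mem_univ _)
  exact hc (funext fun k => by fin_cases k <;> assumption)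

lemma exists_natCast_eq_abs_triangleDet {u : Fin 3 → Fin 2 → ℝ} (hu : ∀ i, u i ∈ latticePts 2) :
    ∃ N : ℕ, |triangleDet u| = N := by
  choose z hz using hu
  refine ⟨(((z 1 0 - z 0 0) * (z 2 1 - z 0 1) - (z 1 1 - z 0 1) * (z 2 0 - z 0 0))).natAbs, ?_⟩
  simp [triangleDet, Matrix.det_fin_two, hz]

lemma sum_smul_mem_sumset_two_of_one_le {n : ℕ} {ι : Type*} [Fintype ι] {u : ι → Fin n → ℝ}
    (hu : ∀ i, u i ∈ latticePts n) {μ : ι → ℝ} (hμ : ∀ i, 0 ≤ μ i) (hμ2 : ∑ i, μ i = 2) {i : ι}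
    (hi : 1 ≤ μ i) (hr : ∑ i, μ i • u i ∈ latticePts n) :
    ∑ i, μ i • u i ∈ sumset n 2 (convexHull ℝ (range u) ∩ latticePts n) := by
  classical
  obtain ⟨ν, hν, hν1, hμν⟩ := exists_sum_smul_eq_add_of_one_le u hμ hi
  have hlat : ∑ j, ν j • u j ∈ latticePts n := by
    have := (latticeAddSubgroup n).sub_mem hr (hu i)
    rwa [hμν, add_sub_cancel_right] at this
  rw [hμν]
  exact add_mem_sumset (h₁ := 1) (h₂ := 1)
    (mem_sumset_one ⟨sum_smul_mem_convexHull_range u hν (by linarith), hlat⟩)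
    (mem_sumset_one ⟨subset_convexHull ℝ _ (mem_range_self i), hu i⟩)

theorem mem_sumset_two_of_triangle {u : Fin 3 → Fin 2 → ℝ} (hu : ∀ i, u i ∈ latticePts 2)
    (hdet : triangleDet u ≠ 0) {μ : Fin 3 → ℝ} (hμ : ∀ i, 0 ≤ μ i) (hμ2 : ∑ i, μ i = 2)
    (hr : ∑ i, μ i • u i ∈ latticePts 2) :
    ∑ i, μ i • u i ∈ sumset 2 2 (convexHull ℝ (range u) ∩ latticePts 2) := by
  obtain ⟨N, hN⟩ := exists_natCast_eq_abs_triangleDet hu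
  induction N using Nat.strong_induction_on generalizing u μ with
  | _ N ih =>
    by_cases hpeel : ∃ i, 1 ≤ μ i
    · obtain ⟨i, hi⟩ := hpeel
      exact sum_smul_mem_sumset_two_of_one_le hu hμ hμ2 hi hr
    push Not at hpeel
    set c : Fin 3 → ℝ := fun j => 1 - μ j
    have hc : ∀ j, 0 < c j := fun j => sub_pos.2 (hpeel j)
    have hc1 : ∑ j, c j = 1 := by
      simp only [c, sum_sub_distrib, sum_const, card_univ, Fintype.card_fin, nsmul_eq_mul, hμ2]
      norm_num
    have hμpos : ∀ j, 0 < μ j := by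
      rw [Fin.sum_univ_three] at hμ2
      intro j; fin_cases j <;> dsimp <;> linarith [hpeel 0, hpeel 1, hpeel 2]
    set w := ∑ j, c j • u j
    have hw : w ∈ convexHull ℝ (range u) ∩ latticePts 2 := by
      refine ⟨sum_smul_mem_convexHull_range u (fun j => (hc j).le) hc1, ?_⟩
      have : w = ∑ j, u j - ∑ j, μ j • u j := by simp [w, c, sub_smul, sum_sub_distrib]
      rw [this]
      exact (latticeAddSubgroup 2).sub_mem ((latticeAddSubgroup 2).sum_mem fun j _ => hu j) hr
    obtain ⟨i, ν, hν, hνμ, hνu⟩ := exists_sum_smul_update_eq u hc hc1 hμ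
    set u' := Function.update u i w
    have hu' : ∀ j, u' j ∈ latticePts 2 :=
      (Function.forall_update_iff u fun _ x => x ∈ latticePts 2).2 ⟨hw.2, fun j _ => hu j⟩
    have hdet' : triangleDet u' = c i * triangleDet u := triangleDet_update u i hc1
    obtain ⟨N', hN'⟩ := exists_natCast_eq_abs_triangleDet hu'
    have hlt : N' < N := by
      have : |triangleDet u'| < |triangleDet u| := by
        rw [hdet', abs_mul, abs_of_pos (hc i)]
        exact mul_lt_of_lt_one_left (abs_pos.2 hdet) (by linarith [hμpos i])
      exact_mod_cast hN' ▸ hN ▸ this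
    rw [← hνu]
    exact sumset_mono (inter_subset_inter_left _ (convexHull_range_update_subset hw.1))
      (ih N' hlt hu' (by rw [hdet']; exact mul_ne_zero (hc i).ne' hdet) hν (hνμ.trans hμ2)
        (hνu ▸ hr) hN')

theorem sum_smul_mem_sumset_of_affineIndependent {X : Set (Fin 2 → ℝ)} (hX : Convex ℝ X) {m : ℕ}
    {v : Fin m → Fin 2 → ℝ} (hv : AffineIndependent ℝ v) (hvX : ∀ i, v i ∈ X ∩ latticePts 2)
    (h : ℕ) {μ : Fin m → ℝ} (hμ : ∀ i, 0 ≤ μ i) (hμh : ∑ i, μ i = h)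
    (hy : ∑ i, μ i • v i ∈ latticePts 2) : ∑ i, μ i • v i ∈ sumset 2 h (X ∩ latticePts 2) := by
  have hconv : convexHull ℝ (range v) ∩ latticePts 2 ⊆ X ∩ latticePts 2 :=
    inter_subset_inter_left _ (convexHull_min (range_subset_iff.2 fun i => (hvX i).1) hX)
  induction h generalizing μ with
  | zero =>
    have hμ0 := (sum_eq_zero_iff_of_nonneg fun i _ => hμ i).1 (by exact_mod_cast hμh)
    rw [sum_eq_zero fun i hi => by rw [hμ0 i hi, zero_smul]]
    exact zero_mem_sumset_zero
  | succ h ih =>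
    by_cases hpeel : ∃ i, 1 ≤ μ i
    · obtain ⟨i, hi⟩ := hpeel
      obtain ⟨ν, hν, hνμ, hμν⟩ := exists_sum_smul_eq_add_of_one_le v hμ hi
      rw [hμν] at hy ⊢
      have hνy : ∑ j, ν j • v j ∈ latticePts 2 := by
        have := (latticeAddSubgroup 2).sub_mem hy (hvX i).2
        rwa [add_sub_cancel_right] at this
      exact add_mem_sumset (ih hν (by push_cast at hμh; linarith) hνy) (mem_sumset_one (hvX i))
    push Not at hpeel
    have hm : m ≤ 3 := by
      have := hv.card_le_finrank_succ.trans (Nat.succ_le_succ (Submodule.finrank_le _))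
      simpa using this
    have hhm : h + 1 < m := by
      have hne : (univ : Finset (Fin m)).Nonempty :=
        nonempty_of_sum_ne_zero (hμh.trans_ne (by positivity))
      have : ((h + 1 : ℕ) : ℝ) < m := by
        calc ((h + 1 : ℕ) : ℝ) = ∑ i, μ i := hμh.symm
          _ < ∑ _i : Fin m, (1 : ℝ) := sum_lt_sum_of_nonempty hne fun i _ => hpeel i
          _ = m := by simp
      exact_mod_cast this
    obtain rfl | rfl : h = 0 ∨ h = 1 := by omega
    · exact mem_sumset_one (hconv ⟨sum_smul_mem_convexHull_range v hμ (by simpa using hμh), hy⟩)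
    · obtain rfl : m = 3 := by omega
      exact sumset_mono hconv (mem_sumset_two_of_triangle (fun i => (hvX i).2)
        (triangleDet_ne_zero hv) hμ (by norm_num [hμh]) hy)

theorem sumset_lattice_eq_general (P : Set (Fin 2 → ℝ)) (hP : IsLatticePolytope 2 P)
    (h : ℕ) :
    sumset 2 h (P ∩ latticePts 2) = sumset 2 h P ∩ latticePts 2 := by
  obtain ⟨S, -, hS, rfl⟩ := hP
  refine (sumset_inter_latticePts_subset h).antisymm ?_
  rintro y ⟨hy, hyℤ⟩
  obtain ⟨m, v, μ, hv, hvS, hμ, hμh, rfl⟩ := exists_affineIndependent_of_mem_sumset_convexHull hy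
  exact sum_smul_mem_sumset_of_affineIndependent (convex_convexHull ℝ _) hv
    (fun i => ⟨subset_convexHull ℝ _ (hvS i), hS (hvS i)⟩) h hμ hμh hyℤ

theorem sumset_lattice_eq (P : Set (Fin 2 → ℝ)) (hP : IsLatticePolytope 2 P)
    (h : ℕ) (hh : 0 < h) :
    sumset 2 h (P ∩ latticePts 2) = sumset 2 h P ∩ latticePts 2 :=
  sumset_lattice_eq_general P hP h
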